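/- arXiv:2410.24130 — 2 statements merged into one kernel-verified Lean document; each statement's English description precedes it below -/
import Mathlib

section
/- Upper bound for products with trees: let T be a tree on n ≥ 2 vertices, r ∈ ℤ⁺, G any graph. Then m_e(G□T, r) ≤ m_e(G,r) + (n−1)·m_e(G,r−1) + d^G_{r−1} + Σ_{t=1}^{r−1} d^G_{r−1−t}·(1 + t·Σ_{i=t+1}^{Δ(T)} d^T_i + Σ_{i=2}^{t} (i−1)·d^T_i). -/
/-!
Root the tree `T` at `ρ`; the children and the parent of a vertex are its neighbours farther
from and closer to `ρ`. Seed a minimum `r`-percolating set of `G` in the copy `G × {ρ}`, a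
minimum `(r-1)`-percolating set of `G` in every other copy `G × {x}`, and, for each `v` with
`deg v < r` and each `x`, edges from `(v, x)` to `(v, y)` for children `y` of `x`: all of them,
or just enough that `(v, x)` has `r` infected edges once its `deg v` edges in `G × {x}` and its
edge towards the parent of `x` are infected. By induction on the depth of `x`, the copy
`G × {x}` and its edges to the copy of the parent of `x` become infected: in a non-root copy
each vertex has one infected edge leaving the copy, so `(r-1)`-percolation of the seeds inside
it is simulated by `r`-percolation in `G □ T`. With `s = r - deg v`, the fibre `{v} × T`
receives at most `min s (deg x) - 1` seeds at `x ≠ ρ` and `min s (deg ρ)` at `ρ`; grouping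
the vertices of `G` and of `T` by degree turns these counts into the bound.
-/

open Polynomial

namespace BondPerc

open Classical

set_option maxHeartbeats 1000000

/-- The set of edges eventually infected in `r`-bond bootstrap percolation on `G`
starting from the initially infected set `S`. -/
inductive Infected {V : Type*} (G : SimpleGraph V) (r : ℕ) (S : Set (Sym2 V)) : Sym2 V → Prop
  | init {e : Sym2 V} (he : e ∈ S) : Infected G r S e
  | step {e : Sym2 V} (he : e ∈ G.edgeSet) (v : V) (hv : v ∈ e)
      (T : Finset (Sym2 V)) (hT : r ≤ T.card)
      (hT1 : ∀ f ∈ T, f ∈ G.edgeSet) (hT2 : ∀ f ∈ T, v ∈ f)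
      (hT3 : ∀ f ∈ T, Infected G r S f) : Infected G r S e

/-- `S` percolates in `r`-bond bootstrap percolation on `G`. -/
def Percolates {V : Type*} (G : SimpleGraph V) (r : ℕ) (S : Set (Sym2 V)) : Prop :=
  S ⊆ G.edgeSet ∧ ∀ e ∈ G.edgeSet, Infected G r S e

/-- `m_e(G,r)`: the minimum size of an `r`-percolating set of edges of `G`. -/
noncomputable def me {V : Type*} (G : SimpleGraph V) (r : ℕ) : ℕ :=
  sInf {n | ∃ S : Set (Sym2 V), S.Finite ∧ Percolates G r S ∧ S.ncard = n}

/-- `c` is a proper edge-colouring of `G`: edges sharing a vertex get distinct colours. -/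
def IsProperEdgeColoring {V : Type*} (G : SimpleGraph V) (c : Sym2 V → ℝ) : Prop :=
  ∀ e ∈ G.edgeSet, ∀ f ∈ G.edgeSet, e ≠ f → (∃ v, v ∈ e ∧ v ∈ f) → c e ≠ c f

set_option maxHeartbeats 1000000 in
/-- The vector space `W^r_{G,c}` of tuples of polynomials `(p_v)` with
`deg p_v ≤ min(r, deg v) - 1` and `p_u(c(uv)) = p_v(c(uv))` for every edge `uv`. -/
noncomputable def Wspace {V : Type*} [Fintype V] (G : SimpleGraph V) (r : ℕ)
    (c : Sym2 V → ℝ) : Submodule ℝ (V → Polynomial ℝ) where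
  carrier := {p | (∀ v, (p v).degree < (min r (G.degree v) : ℕ)) ∧
    ∀ u v, G.Adj u v → (p u).eval (c s(u, v)) = (p v).eval (c s(u, v))}
  add_mem' := by
    rintro p q ⟨hp1, hp2⟩ ⟨hq1, hq2⟩
    refine ⟨fun v => lt_of_le_of_lt (degree_add_le _ _) (max_lt (hp1 v) (hq1 v)), ?_⟩
    intro u v huv
    simp only [Pi.add_apply, eval_add, hp2 u v huv, hq2 u v huv]
  zero_mem' := by
    refine ⟨fun v => ?_, fun u v h => by simp⟩
    simp only [Pi.zero_apply, degree_zero]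
    exact WithBot.bot_lt_coe _
  smul_mem' := by
    rintro a p ⟨hp1, hp2⟩
    refine ⟨fun v => lt_of_le_of_lt (degree_smul_le a (p v)) (hp1 v), ?_⟩
    intro u v huv
    simp only [Pi.smul_apply, Polynomial.eval_smul, hp2 u v huv]

/-- `dim W^r_{G,c}`. -/
noncomputable def Wdim {V : Type*} [Fintype V] (G : SimpleGraph V) (r : ℕ)
    (c : Sym2 V → ℝ) : ℕ :=
  Module.finrank ℝ (Wspace G r c)

/-- `d^G_i`, the number of vertices of `G` of degree `i` (indexed by `ℤ`, zero for `i < 0`). -/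
noncomputable def dcount {V : Type*} [Fintype V] (G : SimpleGraph V) (i : ℤ) : ℕ :=
  Nat.card {v : V // (G.degree v : ℤ) = i}

/-- The star `S_k` with centre `0` and `k` leaves. -/
def starGraph (k : ℕ) : SimpleGraph (Fin (k + 1)) :=
  SimpleGraph.fromRel fun i _ => i = 0

/-- The theta graph `H_{k,ℓ}`: two hub vertices joined by three internally disjoint
paths of lengths `1`, `ℓ - 1` and `k - 1`. -/
def thetaGraph (k l : ℕ) : SimpleGraph (Fin 2 ⊕ Fin (l - 2) ⊕ Fin (k - 2)) :=
  SimpleGraph.fromRel fun x y =>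
    (x = Sum.inl 0 ∧ y = Sum.inl 1) ∨
    (x = Sum.inl 0 ∧ ∃ j : Fin (l - 2), y = Sum.inr (Sum.inl j) ∧ j.val = 0) ∨
    (∃ i j : Fin (l - 2), x = Sum.inr (Sum.inl i) ∧ y = Sum.inr (Sum.inl j) ∧
      j.val = i.val + 1) ∨
    (∃ i : Fin (l - 2), x = Sum.inr (Sum.inl i) ∧ i.val = l - 3 ∧ y = Sum.inl 1) ∨
    (x = Sum.inl 0 ∧ ∃ j : Fin (k - 2), y = Sum.inr (Sum.inr j) ∧ j.val = 0) ∨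
    (∃ i j : Fin (k - 2), x = Sum.inr (Sum.inr i) ∧ y = Sum.inr (Sum.inr j) ∧
      j.val = i.val + 1) ∨
    (∃ i : Fin (k - 2), x = Sum.inr (Sum.inr i) ∧ i.val = k - 3 ∧ y = Sum.inl 1)

open Finset SimpleGraph

lemma exists_percolating_finset_card_eq_me {V : Type*} [Fintype V] (G : SimpleGraph V)
    (r : ℕ) : ∃ A : Finset (Sym2 V), Percolates G r A ∧ #A = me G r := by
  have hne : {n | ∃ S : Set (Sym2 V), S.Finite ∧ Percolates G r S ∧ S.ncard = n}.Nonempty :=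
    ⟨_, G.edgeSet, Set.toFinite _, ⟨subset_rfl, fun _ he => Infected.init he⟩, rfl⟩
  obtain ⟨S, hS, hperc, hcard⟩ := Nat.sInf_mem hne
  refine ⟨hS.toFinset, by simpa using hperc, ?_⟩
  rw [me, ← hcard, Set.ncard_eq_toFinset_card _ hS]

lemma me_le_card {V : Type*} {G : SimpleGraph V} {r : ℕ} {S : Finset (Sym2 V)}
    (h : Percolates G r S) : me G r ≤ #S :=
  Nat.sInf_le ⟨S, S.finite_toSet, h, Set.ncard_coe_finset S⟩

section BoxProd

variable {V W : Type*} {G : SimpleGraph V} {T : SimpleGraph W} {r : ℕ}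
  {S : Set (Sym2 (V × W))}

lemma map_mem_edgeSet_boxProd_left (w : W) {e : Sym2 V} (he : e ∈ G.edgeSet) :
    e.map (·, w) ∈ (G □ T).edgeSet :=
  (boxProdLeft G T w).toHom.map_mem_edgeSet he

lemma Infected.of_row_col {a : V} {w : W} {e : Sym2 (V × W)} (he : e ∈ (G □ T).edgeSet)
    (hae : (a, w) ∈ e) (R : Finset (Sym2 V)) (C : Finset W)
    (hR : ∀ f ∈ R, f ∈ G.edgeSet ∧ a ∈ f ∧ Infected (G □ T) r S (f.map (·, w)))
    (hC : ∀ x ∈ C, T.Adj w x ∧ Infected (G □ T) r S s((a, w), (a, x)))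
    (hcard : r ≤ #R + #C) : Infected (G □ T) r S e := by
  have hdisj : Disjoint (R.image (Sym2.map (·, w))) (C.image fun x => s((a, w), (a, x))) := by
    simp only [Finset.disjoint_left, mem_image]
    rintro _ ⟨f, -, rfl⟩ ⟨x, hx, hfx⟩
    have hax : (a, x) ∈ f.map (·, w) := hfx ▸ Sym2.mem_mk_right _ _
    obtain ⟨b, -, hb⟩ := Sym2.mem_map.1 hax
    exact (hC x hx).1.ne (congrArg Prod.snd hb)
  have hrow_inj : Function.Injective (Sym2.map fun b : V => (b, w)) :=
    Sym2.map.injective fun _ _ h => congrArg Prod.fst h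
  have hcol_inj : Function.Injective fun x : W => s((a, w), (a, x)) :=
    fun x y h => by simpa using Sym2.congr_right.1 h
  refine Infected.step he (a, w) hae
    (R.image (Sym2.map (·, w)) ∪ C.image fun x => s((a, w), (a, x))) ?_ ?_ ?_ ?_
  · rwa [card_union_of_disjoint hdisj, card_image_of_injective _ hrow_inj,
      card_image_of_injective _ hcol_inj]
  all_goals
    simp only [mem_union, mem_image]
    rintro _ (⟨f, hf, rfl⟩ | ⟨x, hx, rfl⟩)
  · exact map_mem_edgeSet_boxProd_left w (hR f hf).1
  · exact boxProd_adj_right.2 (hC x hx).1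
  · exact Sym2.mem_map.2 ⟨a, (hR f hf).2.1, rfl⟩
  · exact Sym2.mem_mk_left _ _
  · exact (hR f hf).2.2
  · exact (hC x hx).2

theorem Infected.map_boxProd_left {k : ℕ} {A : Set (Sym2 V)} {w : W} (C : V → Finset W)
    (hA : ∀ f ∈ A, Infected (G □ T) r S (f.map (·, w)))
    (hC : ∀ a, ∀ x ∈ C a, T.Adj w x ∧ Infected (G □ T) r S s((a, w), (a, x)))
    (hcard : ∀ a, r ≤ k + #(C a)) {e : Sym2 V} (he : Infected G k A e) :
    Infected (G □ T) r S (e.map (·, w)) := by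
  induction he with
  | init hf => exact hA _ hf
  | step he v hv R hR hRG hRv _ ih =>
    exact Infected.of_row_col (map_mem_edgeSet_boxProd_left w he) (Sym2.mem_map.2 ⟨v, hv, rfl⟩)
      R (C v) (fun f hf => ⟨hRG f hf, hRv f hf, ih f hf⟩) (hC v) ((hcard v).trans (by omega))

end BoxProd

section RootedTree

variable {W : Type*} [Fintype W] (T : SimpleGraph W) (ρ : W)

noncomputable def childFinset (x : W) : Finset W :=
  {y ∈ T.neighborFinset x | T.dist ρ x < T.dist ρ y}

noncomputable def parentFinset (x : W) : Finset W :=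
  {y ∈ T.neighborFinset x | T.dist ρ y < T.dist ρ x}

variable {T ρ}

lemma mem_childFinset {x y : W} :
    y ∈ childFinset T ρ x ↔ T.Adj x y ∧ T.dist ρ x < T.dist ρ y := by
  simp [childFinset]

lemma mem_parentFinset {x y : W} :
    y ∈ parentFinset T ρ x ↔ T.Adj x y ∧ T.dist ρ y < T.dist ρ x := by
  simp [parentFinset]

lemma mem_childFinset_iff_mem_parentFinset {x y : W} :
    y ∈ childFinset T ρ x ↔ x ∈ parentFinset T ρ y := by
  rw [mem_childFinset, mem_parentFinset, adj_comm]

lemma mem_childFinset_or_mem_parentFinset (hT : T.IsTree) {x y : W} (h : T.Adj x y) :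
    y ∈ childFinset T ρ x ∨ y ∈ parentFinset T ρ x := by
  simp only [mem_childFinset, mem_parentFinset, h, true_and]
  have := hT.dist_ne_of_adj ρ h
  omega

lemma parentFinset_nonempty (hT : T.Connected) {x : W} (hx : x ≠ ρ) :
    (parentFinset T ρ x).Nonempty := by
  obtain ⟨p, hp⟩ := hT.exists_walk_length_eq_dist x ρ
  obtain ⟨y, hxy, q, rfl⟩ := Walk.exists_eq_cons_of_ne hx p
  refine ⟨y, mem_parentFinset.2 ⟨hxy, ?_⟩⟩
  have := dist_le q
  rw [Walk.length_cons] at hp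
  rw [dist_comm, dist_comm (u := ρ)]
  omega

lemma disjoint_childFinset_parentFinset {x : W} :
    Disjoint (childFinset T ρ x) (parentFinset T ρ x) :=
  disjoint_filter.2 fun _ _ h => h.not_gt

lemma card_childFinset_add_card_parentFinset_le (x : W) :
    #(childFinset T ρ x) + #(parentFinset T ρ x) ≤ T.degree x := by
  rw [← card_union_of_disjoint disjoint_childFinset_parentFinset, childFinset, parentFinset,
    ← filter_or, ← T.card_neighborFinset_eq_degree]
  exact card_filter_le _ _

end RootedTree

section Seeds

variable {V W : Type*} [Fintype V] [Fintype W] {G : SimpleGraph V} {T : SimpleGraph W}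
  {r : ℕ} {ρ : W}

noncomputable def seedSet (A B : Finset (Sym2 V)) (ρ : W) (F : V → W → Finset W) :
    Finset (Sym2 (V × W)) :=
  A.image (Sym2.map (·, ρ)) ∪ (univ.erase ρ).biUnion (fun w => B.image (Sym2.map (·, w))) ∪
    univ.biUnion fun v => univ.biUnion fun x => (F v x).image fun y => s((v, x), (v, y))

lemma card_seedSet_le (A B : Finset (Sym2 V)) (ρ : W) (F : V → W → Finset W) :
    #(seedSet A B ρ F) ≤ #A + (Fintype.card W - 1) * #B + ∑ v, ∑ x, #(F v x) := by
  refine (card_union_le _ _).trans (add_le_add ((card_union_le _ _).trans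
    (add_le_add card_image_le ?_)) ?_)
  · calc #((univ.erase ρ).biUnion fun w => B.image (Sym2.map (·, w)))
        ≤ ∑ w ∈ univ.erase ρ, #B :=
          card_biUnion_le.trans (sum_le_sum fun _ _ => card_image_le)
      _ = (Fintype.card W - 1) * #B := by simp [card_erase_of_mem]
  · exact card_biUnion_le.trans (sum_le_sum fun v _ =>
      card_biUnion_le.trans (sum_le_sum fun x _ => card_image_le))

variable {A B : Finset (Sym2 V)} {F : V → W → Finset W}

lemma map_mem_seedSet_root {f : Sym2 V} (hf : f ∈ A) : f.map (·, ρ) ∈ seedSet A B ρ F :=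
  mem_union_left _ (mem_union_left _ (mem_image_of_mem _ hf))

lemma map_mem_seedSet_of_ne_root {w : W} (hw : w ≠ ρ) {f : Sym2 V} (hf : f ∈ B) :
    f.map (·, w) ∈ seedSet A B ρ F :=
  mem_union_left _ (mem_union_right _
    (mem_biUnion.2 ⟨w, mem_erase.2 ⟨hw, mem_univ _⟩, mem_image_of_mem _ hf⟩))

lemma mk_mem_seedSet {v : V} {x y : W} (hy : y ∈ F v x) :
    s((v, x), (v, y)) ∈ seedSet A B ρ F :=
  mem_union_right _
    (mem_biUnion.2 ⟨v, mem_univ _, mem_biUnion.2 ⟨x, mem_univ _, mem_image_of_mem _ hy⟩⟩)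

lemma coe_seedSet_subset_edgeSet (hA : ↑A ⊆ G.edgeSet) (hB : ↑B ⊆ G.edgeSet)
    (hFch : ∀ v x, F v x ⊆ childFinset T ρ x) :
    ↑(seedSet A B ρ F) ⊆ (G □ T).edgeSet := by
  intro e he
  simp only [seedSet, coe_union, coe_biUnion, coe_image, Set.mem_union, Set.mem_iUnion,
    Set.mem_image, mem_coe] at he
  rcases he with (⟨f, hf, rfl⟩ | ⟨w, -, f, hf, rfl⟩) | ⟨v, -, x, -, y, hy, rfl⟩
  · exact map_mem_edgeSet_boxProd_left ρ (hA hf)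
  · exact map_mem_edgeSet_boxProd_left w (hB hf)
  · exact boxProd_adj_right.2 (mem_childFinset.1 (hFch v x hy)).1

lemma infected_seedSet_col {v : V} {x y : W} (hFch : F v x ⊆ childFinset T ρ x)
    (hF : childFinset T ρ x ⊆ F v x ∨ r ≤ G.degree v + #(F v x) + #(parentFinset T ρ x))
    (hrow : ∀ e ∈ G.edgeSet, Infected (G □ T) r (seedSet A B ρ F) (e.map (·, x)))
    (hup : ∀ p ∈ parentFinset T ρ x, Infected (G □ T) r (seedSet A B ρ F) s((v, x), (v, p)))
    (hy : y ∈ childFinset T ρ x) :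
    Infected (G □ T) r (seedSet A B ρ F) s((v, x), (v, y)) := by
  have hseed : ∀ z ∈ F v x, Infected (G □ T) r (seedSet A B ρ F) s((v, x), (v, z)) :=
    fun z hz => Infected.init (mk_mem_seedSet hz)
  rcases hF with hsub | hcard
  · exact hseed y (hsub hy)
  refine Infected.of_row_col (boxProd_adj_right.2 (mem_childFinset.1 hy).1)
    (Sym2.mem_mk_left _ _) (G.incidenceFinset v) (F v x ∪ parentFinset T ρ x) ?_ ?_ ?_
  · intro f hf
    obtain ⟨hfG, hvf⟩ := G.mem_incidenceFinset v f |>.1 hf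
    exact ⟨hfG, hvf, hrow f hfG⟩
  · intro z hz
    rcases mem_union.1 hz with hz | hz
    · exact ⟨(mem_childFinset.1 (hFch hz)).1, hseed z hz⟩
    · exact ⟨(mem_parentFinset.1 hz).1, hup z hz⟩
  · rw [card_union_of_disjoint (disjoint_childFinset_parentFinset.mono_left hFch),
      G.card_incidenceFinset_eq_degree]
    omega

lemma infected_seedSet_copy_and_parent_edges (hT : T.IsTree) (hA : Percolates G r A)
    (hB : Percolates G (r - 1) B) (hFch : ∀ v x, F v x ⊆ childFinset T ρ x)
    (hF : ∀ v x, childFinset T ρ x ⊆ F v x ∨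
      r ≤ G.degree v + #(F v x) + #(parentFinset T ρ x)) (x : W) :
    (∀ e ∈ G.edgeSet, Infected (G □ T) r (seedSet A B ρ F) (e.map (·, x))) ∧
      ∀ v, ∀ p ∈ parentFinset T ρ x,
        Infected (G □ T) r (seedSet A B ρ F) s((v, x), (v, p)) := by
  induction hd : T.dist ρ x using Nat.strong_induction_on generalizing x with
  | _ n ih =>
    have hup : ∀ v, ∀ p ∈ parentFinset T ρ x,
        Infected (G □ T) r (seedSet A B ρ F) s((v, x), (v, p)) := by
      intro v p hp
      obtain ⟨hrow, hup⟩ := ih _ (hd ▸ (mem_parentFinset.1 hp).2) p rfl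
      rw [Sym2.eq_swap]
      exact infected_seedSet_col (hFch v p) (hF v p) hrow (hup v)
        (mem_childFinset_iff_mem_parentFinset.2 hp)
    refine ⟨fun e he => ?_, hup⟩
    by_cases hx : x = ρ
    · subst hx
      exact (hA.2 e he).map_boxProd_left (fun _ => ∅)
        (fun f hf => .init (map_mem_seedSet_root hf)) (by simp) (by simp)
    · have hpar := (parentFinset_nonempty hT.connected hx).card_pos
      exact (hB.2 e he).map_boxProd_left (fun _ => parentFinset T ρ x)
        (fun f hf => .init (map_mem_seedSet_of_ne_root hx hf))
        (fun a p hp => ⟨(mem_parentFinset.1 hp).1, hup a p hp⟩) (fun _ => by omega)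

theorem percolates_seedSet (hT : T.IsTree) (hA : Percolates G r A) (hB : Percolates G (r - 1) B)
    (hFch : ∀ v x, F v x ⊆ childFinset T ρ x)
    (hF : ∀ v x, childFinset T ρ x ⊆ F v x ∨
      r ≤ G.degree v + #(F v x) + #(parentFinset T ρ x)) :
    Percolates (G □ T) r (seedSet A B ρ F) := by
  have key := infected_seedSet_copy_and_parent_edges hT hA hB hFch hF
  refine ⟨coe_seedSet_subset_edgeSet hA.1 hB.1 hFch, fun e he => ?_⟩
  induction e using Sym2.ind with
  | _ p q =>
    obtain ⟨a, x⟩ := p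
    obtain ⟨b, y⟩ := q
    rcases boxProd_adj.1 he with ⟨hab, rfl : x = y⟩ | ⟨hxy, rfl : a = b⟩
    · exact (key x).1 s(a, b) hab
    rcases mem_childFinset_or_mem_parentFinset hT hxy with hy | hy
    · rw [Sym2.eq_swap]
      exact (key y).2 a x (mem_childFinset_iff_mem_parentFinset.1 hy)
    · exact (key x).2 a y hy

end Seeds

section Counting

variable {U : Type*} [Fintype U] (H : SimpleGraph U)

lemma dcount_natCast (i : ℕ) : dcount H i = #{u | H.degree u = i} := by
  rw [dcount, Nat.card_eq_fintype_card, Fintype.card_subtype]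
  simp

lemma sum_dcount_mul (I : Finset ℕ) (g : ℕ → ℕ) :
    ∑ i ∈ I, dcount H i * g i = ∑ u with H.degree u ∈ I, g (H.degree u) := by
  calc ∑ i ∈ I, dcount H i * g i = ∑ i ∈ I, ∑ u with H.degree u = i, g i :=
        sum_congr rfl fun i _ => by rw [dcount_natCast, sum_const, smul_eq_mul]
    _ = _ := by convert sum_fiberwise_eq_sum_filter' univ I (fun u => H.degree u) g

lemma sum_dcount_sub_mul (r : ℕ) (c : ℕ → ℕ) :
    ∑ t ∈ range r, dcount H ((r : ℤ) - 1 - t) * c t =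
      ∑ u with H.degree u < r, c (r - 1 - H.degree u) := by
  rw [← sum_range_reflect]
  have hidx : ∀ i ∈ range r, ((r : ℤ) - 1 - ((r - 1 - i : ℕ) : ℤ)) = i := fun i hi => by
    have := mem_range.1 hi
    omega
  rw [sum_congr rfl fun i hi => by rw [hidx i hi], sum_dcount_mul]
  simp only [mem_range]

noncomputable def fiberSeedCount (t : ℕ) : ℕ :=
  1 + t * (∑ i ∈ Icc (t + 1) H.maxDegree, dcount H i) + ∑ i ∈ Icc 2 t, (i - 1) * dcount H i

lemma one_add_sum_min_degree_sub_one (t : ℕ) :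
    1 + ∑ u, (min (t + 1) (H.degree u) - 1) = fiberSeedCount H t := by
  have hsplit : ∀ u, min (t + 1) (H.degree u) - 1 =
      (if H.degree u ∈ Icc (t + 1) H.maxDegree then t else 0) +
        if H.degree u ∈ Icc 2 t then H.degree u - 1 else 0 := by
    intro u
    have := H.degree_le_maxDegree u
    simp only [mem_Icc]
    split_ifs <;> omega
  have hmul : ∀ I : Finset ℕ, ∀ g : ℕ → ℕ, ∑ i ∈ I, g i * dcount H i =
      ∑ u with H.degree u ∈ I, g (H.degree u) := fun I g => by
    simp_rw [mul_comm (g _), sum_dcount_mul]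
  rw [fiberSeedCount, add_assoc, sum_congr rfl fun u _ => hsplit u, sum_add_distrib,
    ← sum_filter, ← sum_filter, mul_sum, hmul, hmul]

end Counting

section SeedCount

variable {V W : Type*} [Fintype V] [Fintype W] {T : SimpleGraph W}

lemma exists_fiber_seeds (hT : T.Connected) (ρ : W) (t : ℕ) :
    ∃ F : W → Finset W, (∀ x, F x ⊆ childFinset T ρ x) ∧
      (∀ x, childFinset T ρ x ⊆ F x ∨ t + 1 ≤ #(F x) + #(parentFinset T ρ x)) ∧
      ∑ x, #(F x) ≤ fiberSeedCount T t := by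
  have hex : ∀ x, ∃ F ⊆ childFinset T ρ x,
      #F = min (t + 1 - #(parentFinset T ρ x)) #(childFinset T ρ x) :=
    fun x => exists_subset_card_eq (min_le_right _ _)
  choose F hFch hFcard using hex
  refine ⟨F, hFch, fun x => ?_, ?_⟩
  · have := hFcard x
    by_cases h : #(childFinset T ρ x) ≤ t + 1 - #(parentFinset T ρ x)
    · exact .inl (eq_of_subset_of_card_le (hFch x) (by omega)).ge
    · exact .inr (by omega)
  have hle : ∀ x, #(F x) ≤ (min (t + 1) (T.degree x) - 1) + if x = ρ then 1 else 0 := by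
    intro x
    have := card_childFinset_add_card_parentFinset_le (T := T) (ρ := ρ) x
    rw [hFcard]
    split_ifs with hx
    · omega
    · have := (parentFinset_nonempty hT hx).card_pos
      omega
  calc ∑ x, #(F x) ≤ ∑ x, ((min (t + 1) (T.degree x) - 1) + if x = ρ then 1 else 0) :=
        sum_le_sum fun x _ => hle x
    _ = fiberSeedCount T t := by
      rw [sum_add_distrib, sum_ite_eq' univ ρ, if_pos (mem_univ ρ), add_comm,
        one_add_sum_min_degree_sub_one]

lemma exists_seeds (G : SimpleGraph V) (r : ℕ) (hT : T.Connected) (ρ : W) :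
    ∃ F : V → W → Finset W, (∀ v x, F v x ⊆ childFinset T ρ x) ∧
      (∀ v x, childFinset T ρ x ⊆ F v x ∨
        r ≤ G.degree v + #(F v x) + #(parentFinset T ρ x)) ∧
      ∑ v, ∑ x, #(F v x) ≤
        ∑ v with G.degree v < r, fiberSeedCount T (r - 1 - G.degree v) := by
  have hex : ∀ v, ∃ F : W → Finset W, (∀ x, F x ⊆ childFinset T ρ x) ∧
      (∀ x, childFinset T ρ x ⊆ F x ∨ r ≤ G.degree v + #(F x) + #(parentFinset T ρ x)) ∧
      ∑ x, #(F x) ≤ if G.degree v < r then fiberSeedCount T (r - 1 - G.degree v) else 0 := by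
    intro v
    by_cases hv : G.degree v < r
    · obtain ⟨F, hFch, hF, hFcard⟩ := exists_fiber_seeds hT ρ (r - 1 - G.degree v)
      exact ⟨F, hFch, fun x => (hF x).imp_right fun _ => by omega, by rwa [if_pos hv]⟩
    · exact ⟨fun _ => ∅, fun _ => empty_subset _, fun _ => .inr (by omega), by simp⟩
  choose F hFch hF hFcard using hex
  exact ⟨F, hFch, hF, (sum_le_sum fun v _ => hFcard v).trans_eq (sum_filter _ _).symm⟩

end SeedCount

lemma sum_range_le_add_sum_Icc (f : ℕ → ℕ) (r : ℕ) :
    ∑ t ∈ range r, f t ≤ f 0 + ∑ t ∈ Icc 1 (r - 1), f t := by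
  calc ∑ t ∈ range r, f t ≤ ∑ t ∈ insert 0 (Icc 1 (r - 1)), f t :=
        sum_le_sum_of_subset fun t ht => by
          simp only [mem_range] at ht
          simp only [mem_insert, mem_Icc]
          omega
    _ = _ := sum_insert (by simp)

theorem tree_upper_general {V W : Type*} [Fintype V] [Fintype W] (G : SimpleGraph V)
    (T : SimpleGraph W) (hT : T.IsTree) (r : ℕ) :
    me (G □ T) r ≤
      me G r + (Fintype.card W - 1) * me G (r - 1) + dcount G ((r : ℤ) - 1) +
      ∑ t ∈ Finset.Icc 1 (r - 1),
        dcount G ((r : ℤ) - 1 - t) *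
          (1 + t * (∑ i ∈ Finset.Icc (t + 1) T.maxDegree, dcount T (i : ℤ)) +
            ∑ i ∈ Finset.Icc 2 t, (i - 1) * dcount T (i : ℤ)) := by
  obtain ⟨A, hA, hAcard⟩ := exists_percolating_finset_card_eq_me G r
  obtain ⟨B, hB, hBcard⟩ := exists_percolating_finset_card_eq_me G (r - 1)
  obtain ⟨ρ⟩ := hT.connected.nonempty
  obtain ⟨F, hFch, hF, hFcard⟩ := exists_seeds G r hT.connected ρ
  calc me (G □ T) r ≤ #(seedSet A B ρ F) := me_le_card (percolates_seedSet hT hA hB hFch hF)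
    _ ≤ #A + (Fintype.card W - 1) * #B + ∑ v, ∑ x, #(F v x) := card_seedSet_le A B ρ F
    _ ≤ me G r + (Fintype.card W - 1) * me G (r - 1) +
          ∑ t ∈ range r, dcount G ((r : ℤ) - 1 - t) * fiberSeedCount T t := by
      rw [hAcard, hBcard, sum_dcount_sub_mul]
      gcongr
    _ ≤ _ := by
      rw [add_assoc _ (dcount G _)]
      gcongr
      refine (sum_range_le_add_sum_Icc
        (fun t => dcount G ((r : ℤ) - 1 - t) * fiberSeedCount T t) r).trans_eq ?_
      simp [fiberSeedCount]

/-- Upper bound on `m_e(G □ T, r)` for a tree `T` on `n ≥ 2` vertices. -/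
theorem tree_upper {V W : Type*} [Fintype V] [Fintype W] (G : SimpleGraph V)
    (T : SimpleGraph W) (hT : T.IsTree) (hn : 2 ≤ Fintype.card W) (r : ℕ) (hr : 1 ≤ r) :
    me (G □ T) r ≤
      me G r + (Fintype.card W - 1) * me G (r - 1) + dcount G ((r : ℤ) - 1) +
      ∑ t ∈ Finset.Icc 1 (r - 1),
        dcount G ((r : ℤ) - 1 - t) *
          (1 + t * (∑ i ∈ Finset.Icc (t + 1) T.maxDegree, dcount T (i : ℤ)) +
            ∑ i ∈ Finset.Icc 2 t, (i - 1) * dcount T (i : ℤ)) :=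
  tree_upper_general G T hT r

end BondPerc
end

section
/- If δ(G) ≥ r, then m_e(G□S_k, r) ≤ m_e(G,r) + k·m_e(G,r−1): the union of an optimal r-percolating set on the central copy of G and optimal (r−1)-percolating sets on each of the k leaf copies of G percolates in G□S_k. -/
open Polynomial

namespace BondPerc

open Classical

set_option maxHeartbeats 1000000

/-!
The central copy of `G` percolates on its own. Every spoke `(v, 0)(v, i)` then has `deg v ≥ r`
infected edges of the central copy at `(v, 0)`, so it becomes infected too. In a leaf copy the
infected spoke at each vertex `(v, i)` adds one to the count of infected edges there, which
turns the `(r - 1)`-percolating set of that copy into an `r`-percolating one. Counting the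
initial edges copy by copy gives the bound on `m_e`.
-/

open SimpleGraph

section Embedding

variable {V W : Type*} {G : SimpleGraph V} {G' : SimpleGraph W} {r : ℕ}

theorem Infected.of_incident {S : Set (Sym2 V)} {e : Sym2 V} (he : e ∈ G.edgeSet) {v : V}
    (hv : v ∈ e) (T : Finset (Sym2 V)) (hT : r ≤ T.card)
    (hTinf : ∀ f ∈ T, f ∈ G.incidenceSet v ∧ Infected G r S f) : Infected G r S e :=
  .step he v hv T hT (fun f hf => (hTinf f hf).1.1) (fun f hf => (hTinf f hf).1.2)
    (fun f hf => (hTinf f hf).2)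

theorem Infected.of_le_degree (φ : G ↪g G') {U : Set (Sym2 W)}
    (hcopy : ∀ f ∈ G.edgeSet, Infected G' r U (f.map φ)) {v : V} [Fintype (G.neighborSet v)]
    (hdeg : r ≤ G.degree v) {e : Sym2 W} (he : e ∈ G'.edgeSet) (hv : φ v ∈ e) :
    Infected G' r U e := by
  refine .of_incident he hv ((G.incidenceFinset v).image (Sym2.map φ)) ?_ ?_
  · rwa [Finset.card_image_of_injective _ (Sym2.map.injective φ.injective),
      card_incidenceFinset_eq_degree]
  · simp only [Finset.mem_image, mem_incidenceFinset]
    rintro _ ⟨f, hf, rfl⟩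
    exact ⟨⟨φ.map_mem_edgeSet_iff.2 hf.1, Sym2.mem_map.2 ⟨v, hf.2, rfl⟩⟩, hcopy f hf.1⟩

theorem Infected.map_of_boost (φ : G ↪g G') {r' : ℕ} {S : Set (Sym2 V)} {U : Set (Sym2 W)}
    (hinit : ∀ e ∈ S, Infected G' r U (e.map φ))
    (hboost : ∀ v, ∃ T : Finset (Sym2 W), r ≤ r' + T.card ∧ ∀ f ∈ T,
      f ∈ G'.incidenceSet (φ v) ∧ f ∉ Set.range (Sym2.map φ) ∧ Infected G' r U f)
    {e : Sym2 V} (he : Infected G r' S e) : Infected G' r U (e.map φ) := by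
  induction he with
  | init hS => exact hinit _ hS
  | step he v hv T hT hTG hTv _ ih =>
    obtain ⟨T', hcard, hT'⟩ := hboost v
    have hdisj : Disjoint (T.image (Sym2.map φ)) T' := by
      rw [Finset.disjoint_left]
      rintro _ hf hf'
      obtain ⟨g, -, rfl⟩ := Finset.mem_image.1 hf
      exact (hT' _ hf').2.1 ⟨g, rfl⟩
    refine .of_incident (φ.map_mem_edgeSet_iff.2 he) (Sym2.mem_map.2 ⟨v, hv, rfl⟩)
      (T.image (Sym2.map φ) ∪ T') ?_ ?_
    · rw [Finset.card_union_of_disjoint hdisj,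
        Finset.card_image_of_injective _ (Sym2.map.injective φ.injective)]
      omega
    · simp only [Finset.mem_union, Finset.mem_image]
      rintro f (⟨g, hg, rfl⟩ | hf)
      · exact ⟨⟨φ.map_mem_edgeSet_iff.2 (hTG g hg), Sym2.mem_map.2 ⟨v, hTv g hg, rfl⟩⟩, ih g hg⟩
      · exact ⟨(hT' f hf).1, (hT' f hf).2.2⟩

theorem Percolates.infected_map (φ : G ↪g G') {S : Set (Sym2 V)} {U : Set (Sym2 W)}
    (hS : Percolates G r S) (hSU : ∀ e ∈ S, e.map φ ∈ U) {e : Sym2 V} (he : e ∈ G.edgeSet) :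
    Infected G' r U (e.map φ) :=
  (hS.2 e he).map_of_boost φ (fun f hf => .init (hSU f hf)) fun _ => ⟨∅, by simp, by simp⟩

theorem me_le_ncard {S : Set (Sym2 V)} (hS : Percolates G r S) (hfin : S.Finite) :
    me G r ≤ S.ncard :=
  Nat.sInf_le ⟨S, hfin, hS, rfl⟩

end Embedding

section BoxProd

variable {V W : Type*} {G : SimpleGraph V} {H : SimpleGraph W}

theorem exists_eq_map_of_mem_edgeSet_boxProd {e : Sym2 (V × W)} (he : e ∈ (G □ H).edgeSet) :
    (∃ w, ∃ f ∈ G.edgeSet, e = f.map (G.boxProdLeft H w)) ∨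
      ∃ v, ∃ f ∈ H.edgeSet, e = f.map (G.boxProdRight H v) := by
  induction e using Sym2.ind with
  | _ x y =>
    obtain ⟨x₁, x₂⟩ := x
    obtain ⟨y₁, y₂⟩ := y
    rcases boxProd_adj.1 he with ⟨hG, h₂ : x₂ = y₂⟩ | ⟨hH, h₁ : x₁ = y₁⟩
    · subst h₂; exact .inl ⟨x₂, s(x₁, y₁), hG, rfl⟩
    · subst h₁; exact .inr ⟨x₁, s(x₂, y₂), hH, rfl⟩

theorem mk_notMem_range_map_boxProdLeft {v : V} {w w' : W} (hw : w ≠ w') :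
    s((v, w), (v, w')) ∉ Set.range (Sym2.map (G.boxProdLeft H w')) := by
  rintro ⟨f, hf⟩
  have : (v, w) ∈ f.map (G.boxProdLeft H w') := hf ▸ Sym2.mem_mk_left _ _
  obtain ⟨_, -, h⟩ := Sym2.mem_map.1 this
  exact hw (congrArg Prod.snd h).symm

end BoxProd

theorem starGraph_adj {k : ℕ} {i j : Fin (k + 1)} :
    (starGraph k).Adj i j ↔ i ≠ j ∧ (i = 0 ∨ j = 0) := by
  simp [starGraph, SimpleGraph.fromRel_adj]

theorem exists_eq_mk_zero_of_mem_edgeSet_starGraph {k : ℕ} {f : Sym2 (Fin (k + 1))}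
    (hf : f ∈ (starGraph k).edgeSet) :
    ∃ i ≠ 0, f = s(0, i) := by
  induction f using Sym2.ind with
  | _ i j =>
    obtain ⟨hij, rfl | rfl⟩ := starGraph_adj.1 hf
    · exact ⟨j, hij.symm, rfl⟩
    · exact ⟨i, hij, Sym2.eq_swap⟩

theorem mk_zero_mem_edgeSet_boxProd_starGraph {V : Type*} {G : SimpleGraph V} {k : ℕ} (v : V)
    {i : Fin (k + 1)} (hi : i ≠ 0) : s((v, 0), (v, i)) ∈ (G □ starGraph k).edgeSet :=
  boxProd_adj.2 (.inr ⟨starGraph_adj.2 ⟨hi.symm, .inl rfl⟩, rfl⟩)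

section Star

variable {V : Type*} {G : SimpleGraph V} {r k : ℕ}

def starUnion (F : Fin (k + 1) → Set (Sym2 V)) : Set (Sym2 (V × Fin (k + 1))) :=
  ⋃ i, Sym2.map (fun v => (v, i)) '' F i

theorem map_mem_starUnion {F : Fin (k + 1) → Set (Sym2 V)} (i : Fin (k + 1)) {e : Sym2 V}
    (he : e ∈ F i) : e.map (G.boxProdLeft (starGraph k) i) ∈ starUnion F :=
  Set.mem_iUnion.2 ⟨i, Set.mem_image_of_mem _ he⟩

theorem percolates_starUnion [G.LocallyFinite] (hdeg : ∀ v, r ≤ G.degree v)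
    {F : Fin (k + 1) → Set (Sym2 V)} (h0 : Percolates G r (F 0))
    (hi : ∀ i ≠ 0, Percolates G (r - 1) (F i)) :
    Percolates (G □ starGraph k) r (starUnion F) := by
  set U := starUnion F
  have hcenter : ∀ e ∈ G.edgeSet, Infected (G □ starGraph k) r U
      (e.map (G.boxProdLeft (starGraph k) 0)) :=
    fun e he => h0.infected_map _ (fun f hf => map_mem_starUnion 0 hf) he
  have hspoke : ∀ v, ∀ i ≠ 0, Infected (G □ starGraph k) r U s((v, 0), (v, i)) :=
    fun v i hi0 => .of_le_degree _ hcenter (hdeg v)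
      (mk_zero_mem_edgeSet_boxProd_starGraph v hi0) (Sym2.mem_mk_left _ _)
  have hleaf : ∀ i ≠ 0, ∀ e ∈ G.edgeSet, Infected (G □ starGraph k) r U
      (e.map (G.boxProdLeft (starGraph k) i)) := by
    refine fun i hi0 e he => ((hi i hi0).2 e he).map_of_boost _
      (fun f hf => .init (map_mem_starUnion i hf)) fun v => ⟨{s((v, 0), (v, i))}, ?_, ?_⟩
    · rw [Finset.card_singleton]; omega
    · simp only [Finset.mem_singleton, forall_eq]
      exact ⟨⟨mk_zero_mem_edgeSet_boxProd_starGraph v hi0, Sym2.mem_mk_right _ _⟩,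
        mk_notMem_range_map_boxProdLeft hi0.symm, hspoke v i hi0⟩
  refine ⟨?_, fun e he => ?_⟩
  · rintro _ ⟨_, ⟨i, rfl⟩, ⟨f, hf, rfl⟩⟩
    have hFi : F i ⊆ G.edgeSet := if h : i = 0 then h ▸ h0.1 else (hi i h).1
    exact (G.boxProdLeft (starGraph k) i).map_mem_edgeSet_iff.2 (hFi hf)
  rcases exists_eq_map_of_mem_edgeSet_boxProd he with ⟨i, f, hf, rfl⟩ | ⟨v, f, hf, rfl⟩
  · exact if h : i = 0 then h ▸ hcenter f hf else hleaf i h f hf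
  · obtain ⟨i, hi0, rfl⟩ := exists_eq_mk_zero_of_mem_edgeSet_starGraph hf
    exact hspoke v i hi0

theorem ncard_starUnion_le (F : Fin (k + 1) → Set (Sym2 V)) :
    (starUnion F).ncard ≤ ∑ i, (F i).ncard := by
  calc (starUnion F).ncard ≤ ∑ i, (Sym2.map (fun v => (v, i)) '' F i).ncard := by
        simpa [starUnion] using Finset.set_ncard_biUnion_le Finset.univ
          fun i => Sym2.map (fun v => (v, i)) '' F i
    _ = ∑ i, (F i).ncard := Finset.sum_congr rfl fun i _ =>
        Set.ncard_image_of_injective _ (Sym2.map.injective (Prod.mk_left_injective i))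

end Star

theorem star_union_percolates_general {V : Type*} [Fintype V] (G : SimpleGraph V) (r k : ℕ)
    (hdel : r ≤ G.minDegree)
    (F : Fin (k + 1) → Set (Sym2 V))
    (h0 : Percolates G r (F 0)) (h0fin : (F 0).Finite) (h0card : (F 0).ncard = me G r)
    (hi : ∀ i : Fin (k + 1), i ≠ 0 →
      Percolates G (r - 1) (F i) ∧ (F i).Finite ∧ (F i).ncard = me G (r - 1)) :
    Percolates (G □ starGraph k) r (⋃ i, Sym2.map (fun v => (v, i)) '' F i) ∧
      me (G □ starGraph k) r ≤ me G r + k * me G (r - 1) := by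
  have hperc : Percolates (G □ starGraph k) r (starUnion F) :=
    percolates_starUnion (fun v => hdel.trans (G.minDegree_le_degree v)) h0
      fun i h => (hi i h).1
  have hfin : (starUnion F).Finite := Set.finite_iUnion fun i =>
    (if h : i = 0 then h ▸ h0fin else (hi i h).2.1).image _
  have hsum : ∑ i, (F i).ncard = me G r + k * me G (r - 1) := by
    rw [Fin.sum_univ_succ, h0card,
      Finset.sum_congr rfl fun i _ => (hi i.succ i.succ_ne_zero).2.2]
    simp
  exact ⟨hperc, (me_le_ncard hperc hfin).trans (hsum ▸ ncard_starUnion_le F)⟩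

/-- If `δ(G) ≥ r`, the union of an optimal `r`-percolating set on the central copy and
optimal `(r-1)`-percolating sets on the leaf copies percolates in `G □ S_k`, whence
`m_e(G □ S_k, r) ≤ m_e(G, r) + k·m_e(G, r-1)`. -/
theorem star_union_percolates {V : Type*} [Fintype V] (G : SimpleGraph V) (r k : ℕ)
    (hr : 1 ≤ r) (hk : 1 ≤ k) (hdel : r ≤ G.minDegree)
    (F : Fin (k + 1) → Set (Sym2 V))
    (h0 : Percolates G r (F 0)) (h0fin : (F 0).Finite) (h0card : (F 0).ncard = me G r)
    (hi : ∀ i : Fin (k + 1), i ≠ 0 →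
      Percolates G (r - 1) (F i) ∧ (F i).Finite ∧ (F i).ncard = me G (r - 1)) :
    Percolates (G □ starGraph k) r (⋃ i, Sym2.map (fun v => (v, i)) '' F i) ∧
      me (G □ starGraph k) r ≤ me G r + k * me G (r - 1) :=
  star_union_percolates_general G r k hdel F h0 h0fin h0card hi

end BondPerc
end
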